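/- arXiv:2509.17474 — 5 statements merged into one kernel-verified Lean document; each statement's English description precedes it below -/
import Mathlib

section
/- Let U ≥ 2 be an integer, α = 1/U, and let χ̂*_α(h) denote the h-th Fourier coefficient of χ*_α (so χ̂*_α(0) = α and χ̂*_α(h) = sin(πhα)/(πh) for h ≠ 0). Then for every integer a, the sum over all k ∈ ℤ of |χ̂*_α(kU + a)|² equals 1/U². -/
/-!
Write `χ̂*_α(h) = α · sinc(π h α)`. For `α = 1/U` the terms of the sum become
`U⁻² · sinc(π (k + a/U))²`, so it suffices that `∑ₙ sinc(π (n + x))² = 1` for every real `x`.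
This is Parseval's identity for `t ↦ exp(2π i x t)` on `[0, 1]`, a function of modulus one whose
`n`-th Fourier coefficient is `exp(π i (x - n)) · sinc(π (x - n))`.
-/

open Complex Real MeasureTheory

/-- The Fourier coefficients of the 1-periodic characteristic function of
`[-α/2, α/2)` modulo 1: `χ̂*_α(0) = α` and `χ̂*_α(h) = sin(πhα)/(πh)` for `h ≠ 0`. -/
noncomputable def chiStarHat (α : ℝ) (h : ℤ) : ℝ :=
  if h = 0 then α else Real.sin (Real.pi * h * α) / (Real.pi * h)

lemma chiStarHat_eq_mul_sinc (α : ℝ) (h : ℤ) : chiStarHat α h = α * sinc (π * h * α) := by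
  rcases eq_or_ne h 0 with rfl | hh
  · simp [chiStarHat]
  rcases eq_or_ne α 0 with rfl | hα
  · simp [chiStarHat]
  have hπh : π * h ≠ 0 := mul_ne_zero pi_ne_zero (Int.cast_ne_zero.mpr hh)
  rw [chiStarHat, if_neg hh, sinc_of_ne_zero (mul_ne_zero hπh hα)]
  field_simp

lemma integral_exp_two_pi_I_mul (y : ℝ) :
    ∫ t in (0:ℝ)..1, exp (2 * π * I * y * t) = exp (π * I * y) * (sinc (π * y) : ℂ) := by
  rcases eq_or_ne y 0 with rfl | hy
  · simp
  have hc : (2 * π * I * y : ℂ) ≠ 0 := by simp [hy, pi_ne_zero]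
  rw [integral_exp_mul_complex hc, sinc_of_ne_zero (mul_ne_zero pi_ne_zero hy)]
  push_cast
  have hsq : exp (2 * π * I * y * 1) = exp (π * I * y) ^ 2 := by
    rw [← Complex.exp_nat_mul]; ring_nf
  have hneg : exp (-(π * y) * I) = (exp (π * I * y))⁻¹ := by
    rw [← Complex.exp_neg]; ring_nf
  rw [Complex.sin, hsq, hneg, mul_zero, Complex.exp_zero]
  have he : exp (π * I * y) ≠ 0 := Complex.exp_ne_zero _
  field_simp
  rw [I_sq]
  ring

lemma fourierCoeffOn_exp_two_pi_I_mul (x : ℝ) (n : ℤ) :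
    fourierCoeffOn zero_lt_one (fun t : ℝ ↦ exp (2 * π * I * x * t)) n =
      ∫ t in (0:ℝ)..1, exp (2 * π * I * ↑(x - n) * t) := by
  rw [fourierCoeffOn_eq_integral]
  simp only [sub_zero, div_one, one_smul, fourier_coe_apply, smul_eq_mul, ← Complex.exp_add]
  congr 1 with t
  push_cast
  ring_nf

lemma tsum_sinc_sq_sub_int (x : ℝ) : ∑' n : ℤ, sinc (π * (x - n)) ^ 2 = 1 := by
  have hL2 : MemLp (fun t : ℝ ↦ exp (2 * π * I * x * t)) 2 (volume.restrict (Set.Ioc 0 1)) :=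
    MemLp.of_bound (by fun_prop : Continuous _).aestronglyMeasurable 1
      (Filter.Eventually.of_forall fun t ↦ by simp [Complex.norm_exp])
  calc ∑' n : ℤ, sinc (π * (x - n)) ^ 2
      = ∑' n : ℤ, ‖fourierCoeffOn zero_lt_one (fun t : ℝ ↦ exp (2 * π * I * x * t)) n‖ ^ 2 := by
        congr 1 with n
        rw [fourierCoeffOn_exp_two_pi_I_mul, integral_exp_two_pi_I_mul, norm_mul, norm_real,
          norm_exp]
        simp
    _ = (1 - 0)⁻¹ • ∫ t in (0:ℝ)..1, ‖exp (2 * π * I * x * t)‖ ^ 2 :=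
        tsum_sq_fourierCoeffOn zero_lt_one hL2
    _ = 1 := by simp [norm_exp]

lemma tsum_sinc_sq_int_add (x : ℝ) : ∑' n : ℤ, sinc (π * (n + x)) ^ 2 = 1 := by
  rw [← tsum_sinc_sq_sub_int x, ← (Equiv.neg ℤ).tsum_eq]
  congr 1 with n
  simp [sub_eq_add_neg, add_comm]

/-- For `U ≥ 2`, `α = 1/U` and any integer `a`,
`Σ_{k ∈ ℤ} |χ̂*_α(kU + a)|² = 1/U²`. -/
theorem chiStarHat_sq_sum_arith_prog (U : ℕ) (hU : 2 ≤ U) (a : ℤ) :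
    ∑' k : ℤ, (chiStarHat (1 / U) (k * U + a)) ^ 2 = 1 / (U : ℝ) ^ 2 := by
  have hU0 : (U : ℝ) ≠ 0 := Nat.cast_ne_zero.mpr (by omega)
  have hterm (k : ℤ) :
      chiStarHat (1 / U) (k * U + a) ^ 2 = 1 / (U : ℝ) ^ 2 * sinc (π * (k + a / U)) ^ 2 := by
    rw [chiStarHat_eq_mul_sinc]
    push_cast
    field_simp
  rw [tsum_congr hterm, tsum_mul_left, tsum_sinc_sq_int_add, mul_one]
end

section
/- Let U, H be integers with 2 ≤ U ≤ H+1, α = 1/U, and let B*_{α,H}(x) = Σ_{|h|≤H} (1/(H+1))(1 - |h|/(H+1)) cos(πhα) e(hx) be the Vaaler majorant kernel. Then Σ_{0≤u<U} (χ*_α ∗ B*_{α,H})(u/U) = 1/(H+1). -/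
open scoped Classical

open intervalIntegral

/-- The 1-periodic characteristic function of `[-α/2, α/2)` modulo 1 (ℂ-valued). -/
noncomputable def chiStarC (α : ℝ) (x : ℝ) : ℂ :=
  if ∃ k : ℤ, x - k ∈ Set.Ico (-(α / 2)) (α / 2) then 1 else 0

/-- Fourier coefficients of the Vaaler majorant kernel `B*_{α,H}`. -/
noncomputable def BStarHat (α : ℝ) (H : ℕ) (h : ℤ) : ℝ :=
  (1 / ((H : ℝ) + 1)) * (1 - |(h : ℝ)| / ((H : ℝ) + 1)) * Real.cos (Real.pi * h * α)

/-- The Vaaler majorant kernel `B*_{α,H}(x) = Σ_{|h|≤H} B̂*_{α,H}(h) e(hx)`. -/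
noncomputable def BStar (α : ℝ) (H : ℕ) (x : ℝ) : ℂ :=
  ∑ h ∈ Finset.Icc (-(H : ℤ)) (H : ℤ),
    (BStarHat α H h : ℂ) * Complex.exp (2 * Real.pi * Complex.I * h * x)

/-!
The `U` translates `u/U + [-1/(2U), 1/(2U))` of the support of `χ*_{1/U}` tile `ℝ/ℤ`, so
`Σ_u χ*_{1/U}(u/U - t) = 1` for every `t`. Summing the convolutions therefore leaves
`∫ B*_{α,H} = B̂*_{α,H}(0) = 1/(H+1)`.
-/

open Finset

lemma measurable_chiStarC (α : ℝ) : Measurable (chiStarC α) := by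
  refine Measurable.ite ?_ measurable_const measurable_const
  simp_rw [Set.ofPred_exists]
  exact MeasurableSet.iUnion fun k => measurable_sub_const (k : ℝ) measurableSet_Ico

lemma norm_chiStarC_le_one (α x : ℝ) : ‖chiStarC α x‖ ≤ 1 := by
  unfold chiStarC; split <;> simp

/-- `⌈U t - 1/2⌉` is the integer nearest to `U t`, halves rounded down. -/
lemma chiStarC_one_div_eq_ite {U : ℕ} (hU : 0 < U) (u : ℤ) (t : ℝ) :
    chiStarC (1 / U) (u / U - t) = if u ≡ ⌈U * t - 1 / 2⌉ [ZMOD U] then 1 else 0 := by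
  have hU' : (0 : ℝ) < U := by exact_mod_cast hU
  have mem_iff : ∀ k : ℤ, (u : ℝ) / U - t - k ∈ Set.Ico (-(1 / (U : ℝ) / 2)) (1 / (U : ℝ) / 2) ↔
      ⌈U * t - 1 / 2⌉ = u - U * k := by
    intro k
    have e1 : (u : ℝ) / U - t - k = (u - U * t - U * k) / U := by field_simp
    have e2 : (1 : ℝ) / U / 2 = (1 / 2) / U := by ring
    rw [e1, e2, neg_div', Set.mem_Ico, div_le_div_iff_of_pos_right hU',
      div_lt_div_iff_of_pos_right hU', Int.ceil_eq_iff]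
    push_cast
    constructor <;> intro h <;> constructor <;> linarith [h.1, h.2]
  unfold chiStarC
  refine if_congr ?_ rfl rfl
  simp_rw [mem_iff, Int.modEq_iff_dvd]
  constructor
  · rintro ⟨k, hk⟩
    exact ⟨-k, by rw [hk]; ring⟩
  · rintro ⟨c, hc⟩
    exact ⟨-c, by linarith⟩

lemma sum_range_ite_modEq {M : Type*} [AddCommMonoid M] {U : ℕ} (hU : 0 < U) (m : ℤ) (a : M) :
    ∑ u ∈ range U, (if (u : ℤ) ≡ m [ZMOD U] then a else 0) = a := by
  have hm0 : 0 ≤ m % U := Int.emod_nonneg m (by omega)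
  have hmU : m % U < U := Int.emod_lt_of_pos m (by omega)
  have modEq_iff : ∀ u ∈ range U, ((u : ℤ) ≡ m [ZMOD U] ↔ u = (m % U).toNat) := by
    intro u hu
    have hu_mod : (u : ℤ) % U = u := Int.emod_eq_of_lt (by omega) (by have := mem_range.1 hu; omega)
    rw [Int.ModEq, hu_mod]
    omega
  rw [sum_congr rfl fun u hu => if_congr (modEq_iff u hu) rfl rfl, sum_ite_eq',
    if_pos (mem_range.2 (by omega))]

lemma sum_range_chiStarC_one_div {U : ℕ} (hU : 0 < U) (t : ℝ) :
    ∑ u ∈ range U, chiStarC (1 / U) (u / U - t) = 1 :=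
  calc ∑ u ∈ range U, chiStarC (1 / U) (u / U - t)
      = ∑ u ∈ range U, if (u : ℤ) ≡ ⌈U * t - 1 / 2⌉ [ZMOD U] then (1 : ℂ) else 0 :=
        sum_congr rfl fun u _ => by
          simpa only [Int.cast_natCast] using chiStarC_one_div_eq_ite hU u t
    _ = 1 := sum_range_ite_modEq hU _ 1

lemma integral_exp_two_pi_I_int_mul (a : ℝ) (h : ℤ) :
    ∫ x in a..a + 1, Complex.exp (2 * Real.pi * Complex.I * h * x) = if h = 0 then 1 else 0 := by
  split_ifs with h0
  · simp [h0]
  have hc : 2 * Real.pi * Complex.I * h ≠ 0 := by simp [Real.pi_ne_zero, h0]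
  have periodic : Complex.exp (2 * Real.pi * Complex.I * h * ((a + 1 : ℝ) : ℂ)) =
      Complex.exp (2 * Real.pi * Complex.I * h * a) := by
    rw [← mul_one (Complex.exp (_ * a)), ← Complex.exp_int_mul_two_pi_mul_I h,
      ← Complex.exp_add]
    push_cast
    ring_nf
  rw [integral_exp_mul_complex hc, periodic, sub_self, zero_div]

lemma continuous_BStar (α : ℝ) (H : ℕ) : Continuous (BStar α H) := by
  unfold BStar; fun_prop

lemma integral_BStar (α : ℝ) (H : ℕ) :
    ∫ t in (-(1 / 2) : ℝ)..(1 / 2), BStar α H t = BStarHat α H 0 := by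
  have exp_integral (h : ℤ) := integral_exp_two_pi_I_int_mul (-(1 / 2)) h
  rw [show -(1 / 2 : ℝ) + 1 = 1 / 2 by norm_num] at exp_integral
  unfold BStar
  rw [integral_finsetSum fun h _ => by apply Continuous.intervalIntegrable; fun_prop]
  simp_rw [integral_const_mul, exp_integral, mul_ite, mul_one, mul_zero, sum_ite_eq']
  simp

lemma BStarHat_zero (α : ℝ) (H : ℕ) : BStarHat α H 0 = 1 / ((H : ℝ) + 1) := by
  simp [BStarHat]

lemma intervalIntegrable_chiStarC_mul_BStar (α β : ℝ) (H : ℕ) (x : ℝ) :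
    IntervalIntegrable (fun t => chiStarC α (x - t) * BStar β H t) MeasureTheory.volume
      (-(1 / 2)) (1 / 2) :=
  intervalIntegrable_iff.2 <|
    ((continuous_BStar β H).intervalIntegrable _ _).def'.bdd_mul
      ((measurable_chiStarC α).comp (measurable_const_sub x)).aestronglyMeasurable
      (MeasureTheory.ae_of_all _ fun t => norm_chiStarC_le_one α (x - t))

theorem chiStar_convolution_BStar_sum_general (U H : ℕ) (hU : 2 ≤ U) :
    ∑ u ∈ Finset.range U,
      (∫ t in (-(1 / 2) : ℝ)..(1 / 2), chiStarC (1 / U) ((u : ℝ) / U - t) * BStar (1 / U) H t)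
      = 1 / ((H : ℂ) + 1) := by
  rw [← integral_finsetSum fun u _ => intervalIntegrable_chiStarC_mul_BStar _ _ H _]
  calc ∫ t in (-(1 / 2) : ℝ)..(1 / 2),
        ∑ u ∈ range U, chiStarC (1 / U) ((u : ℝ) / U - t) * BStar (1 / U) H t
      = ∫ t in (-(1 / 2) : ℝ)..(1 / 2), BStar (1 / U) H t := by
        simp_rw [← sum_mul, sum_range_chiStarC_one_div (by omega : 0 < U), one_mul]
    _ = 1 / ((H : ℂ) + 1) := by
        rw [integral_BStar, BStarHat_zero]; push_cast; ring

/-- For `2 ≤ U ≤ H+1` and `α = 1/U`,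
`Σ_{0≤u<U} (χ*_α ∗ B*_{α,H})(u/U) = 1/(H+1)`. -/
theorem chiStar_convolution_BStar_sum (U H : ℕ) (hU : 2 ≤ U) (hH : U ≤ H + 1) :
    ∑ u ∈ Finset.range U,
      (∫ t in (-(1 / 2) : ℝ)..(1 / 2), chiStarC (1 / U) ((u : ℝ) / U - t) * BStar (1 / U) H t)
      = 1 / ((H : ℂ) + 1) :=
  chiStar_convolution_BStar_sum_general U H hU
end

section
/- For all real M > 0, ξ ∈ ℝ \ ℤ, φ ∈ ℝ, and integers N₁ ≤ N₂: Σ_{N₁ < n ≤ N₂} min(M, |sin π(nξ + φ)|^{-1}) ≪ (3 + ⌊(N₂-N₁)‖ξ‖⌋) · (3M + ‖ξ‖^{-1} log(‖ξ‖^{-1})), with an absolute implied constant. -/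
/-!
Reduce to `0 < θ = ‖ξ‖ ≤ 1/2` (the sign of `ξ - round ξ` and the integer part of `ξ` only
change `|sin|` by a sign) and cut `(N₁, N₂]` into `O(1 + (N₂ - N₁)θ)` blocks of `K = ⌊θ⁻¹⌋`
consecutive integers. Inside a block the points `nθ + φ` lie in an interval of length `Kθ ≤ 1`,
hence each is within `1/2` of one of two consecutive integers `r, r + 1`, where
`|sin πx| ≥ 2|x - r|`. The distances `|nθ + φ - r|` form an arithmetic progression of step `θ`:
apart from the two terms nearest to `r`, bounded by `M`, the `k`-th on either side is at least
`kθ`, so a block contributes `O(M + θ⁻¹ H_K) = O(M + θ⁻¹ log θ⁻¹)`.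
-/

open Finset Real

theorem harmonic_mono : Monotone harmonic :=
  monotone_nat_of_le_succ fun n => by
    rw [harmonic_succ]
    exact le_add_of_nonneg_right (by positivity)

theorem sum_inv_le_harmonic_card (s : Finset ℤ) (hs : ∀ j ∈ s, 0 < j) :
    ∑ j ∈ s, ((j : ℝ))⁻¹ ≤ harmonic #s := by
  induction s using Finset.induction_on_max with
  | empty => simp
  | insert a s hlt ih =>
    have ha : a ∉ s := fun h => (hlt a h).false
    have hcard : (#s : ℤ) + 1 ≤ a := by
      have hsub : s ⊆ Ioo 0 a := fun x hx =>
        mem_Ioo.2 ⟨hs x (mem_insert_of_mem hx), hlt x hx⟩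
      have := card_le_card hsub
      rw [Int.card_Ioo] at this
      have := hs a (mem_insert_self a s)
      omega
    rw [sum_insert ha, card_insert_of_notMem ha, harmonic_succ, add_comm]
    push_cast
    gcongr
    · exact ih fun j hj => hs j (mem_insert_of_mem hj)
    · exact_mod_cast hcard

theorem abs_sin_pi_mul_add_intCast (x : ℝ) (m : ℤ) :
    |sin (π * (x + m))| = |sin (π * x)| := by
  rw [mul_add, mul_comm π m, sin_add_int_mul_pi, abs_mul, abs_zpow, abs_neg, abs_one, one_zpow,
    one_mul]

theorem two_mul_abs_le_abs_sin_pi_mul {x : ℝ} (hx : |x| ≤ 1 / 2) :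
    2 * |x| ≤ |sin (π * x)| := by
  wlog h : 0 ≤ x generalizing x
  · simpa [abs_neg] using this (x := -x) (by rwa [abs_neg]) (by linarith)
  rw [abs_of_nonneg h] at hx ⊢
  calc 2 * x = 2 / π * (π * x) := by field_simp
    _ ≤ sin (π * x) := mul_le_sin (by positivity) (by nlinarith [pi_pos])
    _ ≤ |sin (π * x)| := le_abs_self _

theorem min_inv_abs_sin_pi_mul_le {M : ℝ} (hM : 0 ≤ M) {x : ℝ} {g : ℤ}
    (hx : |x - g| ≤ 1 / 2) :
    min M |sin (π * x)|⁻¹ ≤ min M (2 * |x - g|)⁻¹ := by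
  rcases eq_or_ne x g with rfl | hne
  · simp [mul_comm π, sin_int_mul_pi, hM]
  have hpos : 0 < 2 * |x - g| := by simpa [sub_eq_zero] using hne
  have := two_mul_abs_le_abs_sin_pi_mul hx
  rw [← abs_sin_pi_mul_add_intCast (x - g) g, sub_add_cancel] at this
  exact min_le_min_left M (inv_anti₀ hpos this)

theorem sum_min_inv_le_of_nonneg {M θ t : ℝ} (hM : 0 ≤ M) (hθ : 0 < θ) (s : Finset ℤ)
    (hs : ∀ n ∈ s, 0 ≤ n * θ + t) :
    ∑ n ∈ s, min M (2 * |n * θ + t|)⁻¹ ≤ M + (2 * θ)⁻¹ * harmonic #s := by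
  rcases s.eq_empty_or_nonempty with rfl | hne
  · simp only [sum_empty, card_empty, harmonic_zero, Rat.cast_zero, mul_zero, add_zero, hM]
  set n₀ := s.min' hne
  have hterm : ∀ n ∈ s.erase n₀,
      min M (2 * |n * θ + t|)⁻¹ ≤ (2 * θ)⁻¹ * (((n - n₀ : ℤ) : ℝ))⁻¹ := by
    intro n hn
    have hlt : ((n₀ : ℤ) : ℝ) < n := by exact_mod_cast s.min'_lt_of_mem_erase_min' hne hn
    have h₀ := hs n₀ (s.min'_mem hne)
    rw [← mul_inv]
    refine (min_le_right _ _).trans (inv_anti₀ (by push_cast; nlinarith) ?_)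
    rw [abs_of_nonneg (by nlinarith)]
    push_cast
    nlinarith
  have hshift : ∑ n ∈ s.erase n₀, (((n - n₀ : ℤ) : ℝ))⁻¹ ≤ harmonic #s := by
    rw [← sum_image (f := fun k : ℤ => (k : ℝ)⁻¹) (g := fun n => n - n₀)
      (fun _ _ _ _ h => by simpa using h)]
    refine (sum_inv_le_harmonic_card _ ?_).trans ?_
    · simp only [mem_image, forall_exists_index, and_imp]
      rintro _ n hn rfl
      exact sub_pos.2 (s.min'_lt_of_mem_erase_min' hne hn)
    · exact_mod_cast harmonic_mono (card_image_le.trans card_erase_le)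
  rw [← add_sum_erase s _ (s.min'_mem hne)]
  gcongr
  · exact min_le_left _ _
  · exact (sum_le_sum hterm).trans (by rw [← mul_sum]; gcongr)

theorem sum_min_inv_le {M θ : ℝ} (hM : 0 ≤ M) (hθ : 0 < θ) (s : Finset ℤ) (t : ℝ) :
    ∑ n ∈ s, min M (2 * |n * θ + t|)⁻¹ ≤ 2 * M + θ⁻¹ * harmonic #s := by
  set sPos := s.filter fun n : ℤ => 0 ≤ n * θ + t
  set sNeg := s.filter fun n : ℤ => ¬ 0 ≤ n * θ + t
  have hH : ∀ u ⊆ s, M + (2 * θ)⁻¹ * harmonic #u ≤ M + (2 * θ)⁻¹ * harmonic #s := by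
    intro u hu
    gcongr
    exact_mod_cast harmonic_mono (card_le_card hu)
  have hPos := sum_min_inv_le_of_nonneg hM hθ sPos fun n hn => (mem_filter.1 hn).2
  -- the negative side is the nonnegative one for `-n` and `-t`
  have hNeg := sum_min_inv_le_of_nonneg hM hθ (sNeg.image Neg.neg) (t := -t) (by
    simp only [sNeg, mem_image, mem_filter, forall_exists_index, and_imp]
    rintro _ n _ hn rfl
    push_cast
    linarith)
  rw [sum_image (fun _ _ _ _ h => neg_injective h), card_image_of_injective _ neg_injective]
    at hNeg
  simp only [Int.cast_neg, neg_mul, ← neg_add, abs_neg] at hNeg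
  calc ∑ n ∈ s, min M (2 * |n * θ + t|)⁻¹
      = ∑ n ∈ sPos, min M (2 * |n * θ + t|)⁻¹ + ∑ n ∈ sNeg, min M (2 * |n * θ + t|)⁻¹ :=
        (sum_filter_add_sum_filter_not _ _ _).symm
    _ ≤ (M + (2 * θ)⁻¹ * harmonic #s) + (M + (2 * θ)⁻¹ * harmonic #s) :=
        add_le_add (hPos.trans (hH _ (filter_subset _ _)))
          (hNeg.trans (hH _ (filter_subset _ _)))
    _ = 2 * M + θ⁻¹ * harmonic #s := by rw [mul_inv]; ring

theorem sum_min_inv_abs_sin_le_of_mem_Icc {M θ φ : ℝ} (hM : 0 ≤ M) (hθ : 0 < θ)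
    (s : Finset ℤ) (r : ℤ)
    (hs : ∀ n ∈ s, n * θ + φ ∈ Set.Icc (r - 1 / 2 : ℝ) (r + 3 / 2)) :
    ∑ n ∈ s, min M |sin (π * (n * θ + φ))|⁻¹ ≤ 4 * M + 2 * θ⁻¹ * harmonic #s := by
  have hterm : ∀ n ∈ s, min M |sin (π * (n * θ + φ))|⁻¹ ≤
      min M (2 * |n * θ + (φ - r)|)⁻¹ + min M (2 * |n * θ + (φ - (r + 1 : ℤ))|)⁻¹ := by
    intro n hn
    obtain ⟨h₁, h₂⟩ := hs n hn
    have h₀ : ∀ y : ℝ, 0 ≤ min M (2 * |y|)⁻¹ := fun y => le_min hM (by positivity)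
    simp only [← add_sub_assoc]
    rcases le_total (n * θ + φ) (r + 1 / 2) with h | h
    · refine (min_inv_abs_sin_pi_mul_le hM (abs_le.2 ⟨?_, ?_⟩)).trans
        (le_add_of_nonneg_right (h₀ _)) <;> linarith
    · refine (min_inv_abs_sin_pi_mul_le hM (abs_le.2 ⟨?_, ?_⟩)).trans
        (le_add_of_nonneg_left (h₀ _)) <;> push_cast <;> linarith
  calc ∑ n ∈ s, min M |sin (π * (n * θ + φ))|⁻¹
      ≤ ∑ n ∈ s, min M (2 * |n * θ + (φ - r)|)⁻¹
        + ∑ n ∈ s, min M (2 * |n * θ + (φ - (r + 1 : ℤ))|)⁻¹ :=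
        (sum_le_sum hterm).trans_eq sum_add_distrib
    _ ≤ (2 * M + θ⁻¹ * harmonic #s) + (2 * M + θ⁻¹ * harmonic #s) :=
        add_le_add (sum_min_inv_le hM hθ s _) (sum_min_inv_le hM hθ s _)
    _ = 4 * M + 2 * θ⁻¹ * harmonic #s := by ring

theorem sum_Ioc_min_inv_abs_sin_le {M θ φ : ℝ} (hM : 0 ≤ M) (hθ : 0 < θ) {K : ℕ}
    (hK : K * θ ≤ 1) (a : ℤ) :
    ∑ n ∈ Ioc a (a + K), min M |sin (π * (n * θ + φ))|⁻¹ ≤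
      4 * M + 2 * θ⁻¹ * harmonic K := by
  have hcard : #(Ioc a (a + K)) = K := by simp
  set x := ((a : ℝ) + 1) * θ + φ
  refine (sum_min_inv_abs_sin_le_of_mem_Icc hM hθ _ (round x) fun n hn => ?_).trans_eq
    (by rw [hcard])
  have hx := abs_le.1 (abs_sub_round x)
  obtain ⟨h₁, h₂⟩ := mem_Ioc.1 hn
  have h₁' : (a : ℝ) + 1 ≤ n := by exact_mod_cast h₁
  have h₂' : (n : ℝ) ≤ a + K := by exact_mod_cast h₂
  constructor <;> nlinarith

theorem sum_Ioc_add_mul_le {f : ℤ → ℝ} {K : ℕ} {E : ℝ}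
    (h : ∀ a : ℤ, ∑ n ∈ Ioc a (a + K), f n ≤ E) (a : ℤ) (B : ℕ) :
    ∑ n ∈ Ioc a (a + B * K), f n ≤ B * E := by
  induction B with
  | zero => simp
  | succ B ih =>
    have hsplit : Ioc a (a + (B + 1 : ℕ) * K) =
        Ioc a (a + B * K) ∪ Ioc (a + B * K) (a + B * K + K) := by
      have hBK : (0 : ℤ) ≤ B * K := by positivity
      rw [Ioc_union_Ioc_eq_Ioc (by linarith) (by linarith)]
      push_cast
      ring_nf
    rw [hsplit, sum_union (Ioc_disjoint_Ioc_of_le le_rfl)]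
    push_cast
    linarith [h (a + B * K)]

theorem exists_abs_sin_pi_mul_eq (ξ φ : ℝ) : ∃ ψ : ℝ, ∀ n : ℤ,
    |sin (π * (n * ξ + φ))| = |sin (π * (n * |ξ - round ξ| + ψ))| := by
  have hshift (n : ℤ) : n * ξ + φ = (n * (ξ - round ξ) + φ) + (n * round ξ : ℤ) := by
    push_cast
    ring
  rcases abs_choice (ξ - round ξ) with h | h
  · exact ⟨φ, fun n => by rw [h, hshift, abs_sin_pi_mul_add_intCast]⟩
  · refine ⟨-φ, fun n => ?_⟩
    rw [h, hshift, abs_sin_pi_mul_add_intCast, ← abs_neg, ← sin_neg]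
    ring_nf

theorem le_two_mul_floor {x : ℝ} (hx : 1 ≤ x) : x ≤ 2 * ⌊x⌋₊ := by
  have : (1 : ℝ) ≤ ⌊x⌋₊ := by exact_mod_cast Nat.le_floor (by exact_mod_cast hx)
  linarith [Nat.lt_floor_add_one x]

theorem sum_Ioc_floor_inv_min_inv_abs_sin_le {M θ φ : ℝ} (hM : 0 ≤ M) (hθ : 0 < θ)
    (hθ_half : θ ≤ 1 / 2) (a : ℤ) :
    ∑ n ∈ Ioc a (a + ⌊θ⁻¹⌋₊), min M |sin (π * (n * θ + φ))|⁻¹ ≤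
      6 * (3 * M + θ⁻¹ * log θ⁻¹) := by
  have hθ_inv : 2 ≤ θ⁻¹ := by simpa using inv_anti₀ hθ hθ_half
  set K := ⌊θ⁻¹⌋₊
  have hK_le : (K : ℝ) ≤ θ⁻¹ := Nat.floor_le (by positivity)
  have hK_pos : (0 : ℝ) < K := by linarith [le_two_mul_floor (x := θ⁻¹) (by linarith)]
  have hKθ : K * θ ≤ 1 := by simpa [hθ.ne'] using mul_le_mul_of_nonneg_right hK_le hθ.le
  have hharm : (harmonic K : ℝ) ≤ 3 * log θ⁻¹ := by
    linarith [harmonic_le_one_add_log K, log_le_log hK_pos hK_le, log_two_gt_d9,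
      log_le_log (by norm_num) hθ_inv]
  linarith [sum_Ioc_min_inv_abs_sin_le (φ := φ) hM hθ hKθ a,
    mul_le_mul_of_nonneg_left hharm (inv_nonneg.2 hθ.le)]

theorem le_add_mul_floor_inv {θ : ℝ} (hθ : 0 < θ) (hθ_half : θ ≤ 1 / 2) (N₁ N₂ : ℤ) :
    N₂ ≤ N₁ + (2 * ⌊(N₂ - N₁ : ℝ) * θ⌋₊ + 3 : ℕ) * ⌊θ⁻¹⌋₊ := by
  set D := (N₂ - N₁ : ℝ) * θ
  have hK := le_two_mul_floor (x := θ⁻¹) (by rw [le_inv_comm₀ one_pos hθ]; linarith)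
  suffices (N₂ : ℝ) - N₁ ≤ (2 * ⌊D⌋₊ + 3) * ⌊θ⁻¹⌋₊ by
    exact_mod_cast sub_le_iff_le_add'.1 this
  calc (N₂ : ℝ) - N₁ = D * θ⁻¹ := by simp [D, hθ.ne']
    _ ≤ (⌊D⌋₊ + 1) * (2 * ⌊θ⁻¹⌋₊) :=
      mul_le_mul (Nat.lt_floor_add_one D).le hK (by positivity) (by positivity)
    _ ≤ (2 * ⌊D⌋₊ + 3) * ⌊θ⁻¹⌋₊ := by nlinarith [Nat.cast_nonneg (α := ℝ) ⌊θ⁻¹⌋₊]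

/-- For all `M > 0`, `ξ ∈ ℝ \ ℤ`, `φ ∈ ℝ` and integers `N₁ ≤ N₂`:
`Σ_{N₁ < n ≤ N₂} min(M, |sin π(nξ+φ)|⁻¹)
  ≪ (3 + ⌊(N₂-N₁)‖ξ‖⌋)(3M + ‖ξ‖⁻¹ log ‖ξ‖⁻¹)` with an absolute constant. -/
theorem sum_of_minimums_bound :
    ∃ C : ℝ, 0 < C ∧ ∀ (M ξ φ : ℝ) (N₁ N₂ : ℤ), 0 < M → (∀ k : ℤ, ξ ≠ k) → N₁ ≤ N₂ →
      ∑ n ∈ Finset.Ioc N₁ N₂, min M (|Real.sin (Real.pi * (n * ξ + φ))|⁻¹)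
        ≤ C * (3 + (⌊((N₂ : ℝ) - N₁) * |ξ - round ξ|⌋ : ℝ))
            * (3 * M + |ξ - round ξ|⁻¹ * Real.log (|ξ - round ξ|⁻¹)) := by
  refine ⟨12, by norm_num, fun M ξ φ N₁ N₂ hM hξ hN => ?_⟩
  set θ := |ξ - round ξ|
  have hθ : 0 < θ := abs_pos.2 (sub_ne_zero.2 (hξ _))
  have hθ_half : θ ≤ 1 / 2 := abs_sub_round ξ
  obtain ⟨ψ, hψ⟩ := exists_abs_sin_pi_mul_eq ξ φ
  simp only [hψ]
  set D := (N₂ - N₁ : ℝ) * θ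
  have hD : 0 ≤ D := mul_nonneg (sub_nonneg.2 (Int.cast_le.2 hN)) hθ.le
  have hE : 0 ≤ 3 * M + θ⁻¹ * log θ⁻¹ := by
    have : 0 ≤ log θ⁻¹ := log_nonneg (by rw [le_inv_comm₀ one_pos hθ]; linarith)
    positivity
  rw [← natCast_floor_eq_intCast_floor hD]
  calc ∑ n ∈ Ioc N₁ N₂, min M |sin (π * (n * θ + ψ))|⁻¹
      ≤ ∑ n ∈ Ioc N₁ (N₁ + (2 * ⌊D⌋₊ + 3 : ℕ) * ⌊θ⁻¹⌋₊),
          min M |sin (π * (n * θ + ψ))|⁻¹ :=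
        sum_le_sum_of_subset_of_nonneg
          (Ioc_subset_Ioc_right (le_add_mul_floor_inv hθ hθ_half N₁ N₂))
          fun _ _ _ => le_min hM.le (by positivity)
    _ ≤ (2 * ⌊D⌋₊ + 3 : ℕ) * (6 * (3 * M + θ⁻¹ * log θ⁻¹)) :=
        sum_Ioc_add_mul_le (sum_Ioc_floor_inv_min_inv_abs_sin_le hM.le hθ hθ_half) N₁ _
    _ ≤ 12 * (3 + ⌊D⌋₊) * (3 * M + θ⁻¹ * log θ⁻¹) := by push_cast; nlinarith
end

section
/- For all integers a, b, m with m ≥ 1: |Σ_{n=0}^{m-1} e((an² + bn)/m)| ≤ √(2m·gcd(a,m)). -/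
/-!
Weyl differencing: `|S|²` is the sum over shifts `h` of `∑ₓ e((Q(x+h) - Q(x))/m)`, and for
`Q(x) = ax² + bx` the difference is linear in `x` with slope `2ah`. By orthogonality of additive
characters the inner sum has modulus `m` when `2ah ≡ 0 (mod m)` and vanishes otherwise, so
`|S|² ≤ m · #{h mod m : 2ah ≡ 0} ≤ m · gcd(2a, m) ≤ 2m · gcd(a, m)`.
-/

open Finset ComplexConjugate

theorem norm_sum_sq_eq_sum_sum_shift {G 𝕜 : Type*} [AddCommGroup G] [Fintype G] [RCLike 𝕜]
    (f : G → 𝕜) :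
    (‖∑ x, f x‖ ^ 2 : 𝕜) = ∑ h, ∑ x, f (x + h) * conj (f x) := by
  rw [← RCLike.mul_conj, map_sum, sum_mul_sum, sum_comm]
  conv_rhs => rw [sum_comm]
  exact sum_congr rfl fun x _ =>
    (Equiv.sum_comp (Equiv.addLeft x) fun y => f y * conj (f x)).symm

namespace AddChar

variable {R 𝕜 : Type*} [CommRing R] [Fintype R] [RCLike 𝕜] {ψ : AddChar R 𝕜}

theorem sum_quadratic_shift_mul_conj (ψ : AddChar R 𝕜) (a b h : R) :
    ∑ x, ψ (a * (x + h) ^ 2 + b * (x + h)) * conj (ψ (a * x ^ 2 + b * x)) =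
      ψ (a * h ^ 2 + b * h) * ∑ x, ψ (x * (2 * a * h)) := by
  rw [mul_sum]
  refine sum_congr rfl fun x _ => ?_
  rw [← map_neg_eq_conj, ← map_add_eq_mul, ← map_add_eq_mul]
  ring_nf

theorem norm_sum_quadratic_sq_le [DecidableEq R] (hψ : ψ.IsPrimitive) (a b : R) :
    ‖∑ x, ψ (a * x ^ 2 + b * x)‖ ^ 2 ≤ Fintype.card R * #{h | 2 * a * h = 0} := by
  have hsq := norm_sum_sq_eq_sum_sum_shift fun x => ψ (a * x ^ 2 + b * x)
  calc ‖∑ x, ψ (a * x ^ 2 + b * x)‖ ^ 2 = ‖(‖∑ x, ψ (a * x ^ 2 + b * x)‖ ^ 2 : 𝕜)‖ := by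
        rw [← RCLike.ofReal_pow, RCLike.norm_ofReal, abs_of_nonneg (by positivity)]
    _ ≤ ∑ h, ‖ψ (a * h ^ 2 + b * h) * ∑ x, ψ (x * (2 * a * h))‖ := by
        rw [hsq]
        simp only [sum_quadratic_shift_mul_conj]
        exact norm_sum_le _ _
    _ = ∑ h, if 2 * a * h = 0 then (Fintype.card R : ℝ) else 0 := by
        refine sum_congr rfl fun h _ => ?_
        rw [norm_mul, norm_apply, one_mul, sum_mulShift _ hψ]
        split_ifs <;> simp
    _ = Fintype.card R * #{h | 2 * a * h = 0} := by
        rw [sum_ite, sum_const_zero, add_zero, sum_const, nsmul_eq_mul, mul_comm]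

end AddChar

theorem IsAddCyclic.card_zsmul_eq_zero_le {G : Type*} [AddGroup G] [Fintype G] [DecidableEq G]
    [IsAddCyclic G] (k : ℤ) : #{h : G | k • h = 0} ≤ Int.gcd k (Fintype.card G) := by
  calc #{h : G | k • h = 0} = #{h : G | Int.gcd k (Fintype.card G) • h = 0} := by
        simp only [intGCD_nsmul_eq_zero, natCast_zsmul, card_nsmul_eq_zero, and_true]
    _ ≤ Int.gcd k (Fintype.card G) :=
        IsAddCyclic.card_nsmul_eq_zero_le (Int.gcd_pos_of_ne_zero_right _ (by simp))

theorem Int.gcd_mul_left_le (c a : ℤ) {m : ℤ} (hc : c ≠ 0) (hm : m ≠ 0) :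
    Int.gcd (c * a) m ≤ c.natAbs * Int.gcd a m := by
  rw [← Int.gcd_mul_left]
  exact Nat.le_of_dvd (Int.gcd_pos_of_ne_zero_right _ (mul_ne_zero hc hm))
    (Int.dvd_gcd (Int.gcd_dvd_left _ _) ((Int.gcd_dvd_right _ _).trans (dvd_mul_left _ _)))

theorem ZMod.sum_range_natCast {M : Type*} [AddCommMonoid M] (m : ℕ) [NeZero m]
    (g : ZMod m → M) : ∑ n ∈ range m, g n = ∑ x, g x :=
  sum_bij' (fun n _ => n) (fun x _ => x.val) (by simp) (fun x _ => by simpa using x.val_lt)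
    (fun n hn => ZMod.val_cast_of_lt (mem_range.1 hn)) (fun x _ => by simp) (fun _ _ => rfl)

theorem ZMod.card_two_mul_eq_zero_le (a : ℤ) (m : ℕ) [NeZero m] :
    #{h : ZMod m | 2 * (a : ZMod m) * h = 0} ≤ 2 * Int.gcd a m :=
  calc #{h : ZMod m | 2 * (a : ZMod m) * h = 0} = #{h : ZMod m | (2 * a) • h = 0} := by
        simp only [zsmul_eq_mul, Int.cast_mul, Int.cast_ofNat]
    _ ≤ Int.gcd (2 * a) m := by
        simpa using IsAddCyclic.card_zsmul_eq_zero_le (G := ZMod m) (2 * a)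
    _ ≤ 2 * Int.gcd a m := Int.gcd_mul_left_le 2 a two_ne_zero (by simp [NeZero.ne m])

/-- complete quadratic Gauss sum bound:
`|Σ_{n=0}^{m-1} e((an² + bn)/m)| ≤ √(2m·gcd(a,m))`. -/
theorem complete_gauss_sum_bound (a b : ℤ) (m : ℕ) (hm : 1 ≤ m) :
    ‖(∑ n ∈ Finset.range m,
        Complex.exp (2 * Real.pi * Complex.I * (((a * n ^ 2 + b * n : ℤ) : ℝ) / m)))‖
      ≤ Real.sqrt (2 * m * Int.gcd a m) := by
  have : NeZero m := ⟨by omega⟩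
  have hsum : ∑ n ∈ range m,
      Complex.exp (2 * Real.pi * Complex.I * (((a * n ^ 2 + b * n : ℤ) : ℝ) / m)) =
        ∑ x : ZMod m, ZMod.stdAddChar ((a : ZMod m) * x ^ 2 + (b : ZMod m) * x) := by
    rw [← ZMod.sum_range_natCast]
    refine sum_congr rfl fun n _ => ?_
    have hcoe := ZMod.stdAddChar_coe (N := m) (a * n ^ 2 + b * n)
    push_cast at hcoe ⊢
    rw [hcoe, mul_div_assoc]
  rw [hsum, Real.le_sqrt (norm_nonneg _) (by positivity)]
  calc _ ≤ (m : ℝ) * #{h : ZMod m | 2 * (a : ZMod m) * h = 0} := by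
        simpa using AddChar.norm_sum_quadratic_sq_le (ZMod.isPrimitive_stdAddChar m) (a : ZMod m) b
    _ ≤ m * (2 * Int.gcd a m : ℕ) := by gcongr; exact ZMod.card_two_mul_eq_zero_le a m
    _ = 2 * m * Int.gcd a m := by push_cast; ring
end

section
/- Let N ≥ 1, N' ≥ 1, R ≥ 1 be integers and z₁,...,z_N complex numbers. Then |Σ_{n=1}^N z_n|² ≤ ((N + N'R - N')/R) · Re( Σ_{n=1}^N |z_n|² + 2 Σ_{r=1}^{R-1} (1 - r/R) Σ_{n=1}^{N-N'r} z_{n+N'r}·conj(z_n) ), where an inner sum Σ_{n=1}^{N-N'r} is empty (equal to 0) when N'r ≥ N. -/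
/-!
Extend `z` by zero to `ℤ` and let `T m = ∑_{r < R} z (m + N' r)`. As `m` runs over the
`N + N' (R - 1)` integers for which some `m + N' r` lies in `[1, N]`, every `z n` is counted
exactly `R` times, so Cauchy–Schwarz gives `R² ‖∑ z n‖² ≤ (N + N' (R - 1)) ∑_m ‖T m‖²`.
Expanding `‖T m‖²` and summing over `m` first, the `(r, s)` term is the autocorrelation of `z`
at shift `N' |r - s|` (conjugated when `r < s`), and the shift `N' d` with `1 ≤ d < R` comes
from `2 (R - d)` pairs `(r, s)`.
-/

open Finset ComplexConjugate

section Sums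

variable {M : Type*} [AddCommMonoid M]

theorem sum_range_sub_eq_sum_Ico (f : ℕ → M) (R : ℕ) :
    ∑ s ∈ range R, f (R - s) = ∑ d ∈ Ico 1 (R + 1), f d :=
  sum_nbij' (fun s => R - s) (fun d => R - d) (by simp; omega) (by simp; omega)
    (by simp; omega) (by simp; omega) (by simp)

theorem sum_Ico_succ_sub_nsmul (f : ℕ → M) (R : ℕ) :
    ∑ d ∈ Ico 1 (R + 1), (R + 1 - d) • f d =
      ∑ d ∈ Ico 1 R, (R - d) • f d + ∑ d ∈ Ico 1 (R + 1), f d := by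
  have hweight : ∀ d ∈ Ico 1 (R + 1), (R + 1 - d) • f d = (R - d) • f d + f d := by
    intro d hd
    rw [mem_Ico] at hd
    rw [show R + 1 - d = R - d + 1 by omega, succ_nsmul]
  rw [sum_congr rfl hweight, sum_add_distrib,
    ← sum_subset (Ico_subset_Ico_right R.le_succ) fun d hd hd' => ?_]
  obtain rfl : d = R := by simp only [mem_Ico] at hd hd'; omega
  simp

theorem sum_range_sum_range_eq_of_toeplitz {F : ℕ → ℕ → M} {f : ℕ → M} {R : ℕ}
    (hlow : ∀ r < R, ∀ s ≤ r, F r s = f (r - s))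
    (hupp : ∀ r < R, ∀ s ≤ r, F s r = f (r - s)) :
    ∑ r ∈ range R, ∑ s ∈ range R, F r s = R • f 0 + 2 • ∑ d ∈ Ico 1 R, (R - d) • f d := by
  induction R with
  | zero => simp
  | succ R ih =>
    have hrow : ∑ s ∈ range R, F R s = ∑ d ∈ Ico 1 (R + 1), f d := by
      rw [← sum_range_sub_eq_sum_Ico]
      exact sum_congr rfl fun s hs => hlow R (by omega) s (by simp at hs; omega)
    have hcol : ∑ r ∈ range R, F r R = ∑ d ∈ Ico 1 (R + 1), f d := by
      rw [← sum_range_sub_eq_sum_Ico]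
      exact sum_congr rfl fun s hs => hupp R (by omega) s (by simp at hs; omega)
    have hdiag : F R R = f 0 := by simpa using hlow R (by omega) R le_rfl
    simp only [sum_range_succ, sum_add_distrib]
    rw [ih (fun r hr => hlow r (by omega)) (fun r hr => hupp r (by omega)), hrow, hcol, hdiag,
      sum_Ico_succ_sub_nsmul, succ_nsmul (f 0) R]
    abel

theorem sum_Icc_comp_add_of_eq_zero {f : ℤ → M} {a b c d t : ℤ}
    (hf : ∀ k ∉ Icc a b, f k = 0) (hc : c + t ≤ a) (hd : b ≤ d + t) :
    ∑ m ∈ Icc c d, f (m + t) = ∑ k ∈ Icc a b, f k := by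
  have hshift : ∑ m ∈ Icc c d, f (m + t) = ∑ k ∈ Icc (c + t) (d + t), f k := by
    rw [← map_add_right_Icc, sum_map]
    rfl
  rw [hshift]
  exact (sum_subset (Icc_subset_Icc hc hd) fun k _ hk => hf k hk).symm

theorem sum_Icc_natCast (f : ℤ → M) (a b : ℕ) :
    ∑ k ∈ Icc (a : ℤ) b, f k = ∑ n ∈ Icc a b, f n := by
  have hmap : (Icc a b).map Nat.castEmbedding = Icc (a : ℤ) b :=
    coe_injective (by simp [Nat.image_cast_int_Icc])
  rw [← hmap, sum_map]
  rfl

end Sums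

section ExtendByZero

variable {α : Type*} [Zero α] (z : ℕ → α) (N : ℕ)

def extendByZero (k : ℤ) : α := if 1 ≤ k ∧ k ≤ N then z k.toNat else 0

theorem extendByZero_natCast {n : ℕ} (hn : n ∈ Icc 1 N) : extendByZero z N n = z n := by
  rw [mem_Icc] at hn
  rw [extendByZero, if_pos (by omega), Int.toNat_natCast]

theorem extendByZero_of_notMem {k : ℤ} (hk : k ∉ Icc (1 : ℤ) N) : extendByZero z N k = 0 :=
  if_neg (by simpa using hk)

end ExtendByZero

theorem norm_sum_sq_le_card_mul_sum_norm_sq {ι E : Type*} [SeminormedAddCommGroup E]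
    (s : Finset ι) (f : ι → E) : ‖∑ i ∈ s, f i‖ ^ 2 ≤ #s * ∑ i ∈ s, ‖f i‖ ^ 2 :=
  (pow_le_pow_left₀ (norm_nonneg _) (norm_sum_le s f) 2).trans (sq_sum_le_card_mul_sum_sq ..)

section VanDerCorput

variable {𝕜 : Type*} [RCLike 𝕜] (z : ℕ → 𝕜) (N : ℕ)

def autocorr (h : ℕ) : 𝕜 := ∑ n ∈ Icc 1 (N - h), z (n + h) * conj (z n)

theorem re_autocorr_zero : RCLike.re (autocorr z N 0) = ∑ n ∈ Icc 1 N, ‖z n‖ ^ 2 := by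
  simp only [autocorr, Nat.sub_zero, add_zero, map_sum, RCLike.mul_conj, RCLike.re_ofReal_pow]

theorem sum_extendByZero : ∑ k ∈ Icc (1 : ℤ) N, extendByZero z N k = ∑ n ∈ Icc 1 N, z n := by
  rw [← Nat.cast_one, sum_Icc_natCast]
  exact sum_congr rfl fun n hn => extendByZero_natCast z N hn

theorem sum_extendByZero_mul_conj (h : ℕ) :
    ∑ k ∈ Icc (1 : ℤ) N, extendByZero z N (k + h) * conj (extendByZero z N k) =
      autocorr z N h := by
  rw [← Nat.cast_one, sum_Icc_natCast, autocorr,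
    ← sum_subset (Icc_subset_Icc_right (N.sub_le h)) fun n hn hn' => ?_]
  · refine sum_congr rfl fun n hn => ?_
    rw [mem_Icc] at hn
    rw [← Nat.cast_add, extendByZero_natCast z N (by simp; omega),
      extendByZero_natCast z N (by simp; omega)]
  · rw [← Nat.cast_add, extendByZero_of_notMem z N (by simp at hn hn' ⊢; omega), zero_mul]

variable (H R : ℕ)

noncomputable def blockWindow : Finset ℤ := Icc (1 - ↑(H * (R - 1))) N

def blockSum (m : ℤ) : 𝕜 := ∑ r ∈ range R, extendByZero z N (m + ↑(H * r))

theorem sum_blockSum :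
    ∑ m ∈ blockWindow N H R, blockSum z N H R m = R * ∑ n ∈ Icc 1 N, z n := by
  have hrow : ∀ r ∈ range R,
      ∑ m ∈ blockWindow N H R, extendByZero z N (m + ↑(H * r)) =
        ∑ n ∈ Icc 1 N, z n := by
    intro r hr
    have hle : H * r ≤ H * (R - 1) := Nat.mul_le_mul_left H (by simp at hr; omega)
    rw [blockWindow, sum_Icc_comp_add_of_eq_zero (fun k hk => extendByZero_of_notMem z N hk)
      (by omega) (by omega), sum_extendByZero]
  simp only [blockSum]
  rw [sum_comm, sum_congr rfl hrow, sum_const, card_range, nsmul_eq_mul]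

theorem sum_extendByZero_shift_mul_conj {r s : ℕ} (hr : r < R) (hs : s ≤ r) :
    ∑ m ∈ blockWindow N H R,
        extendByZero z N (m + ↑(H * r)) * conj (extendByZero z N (m + ↑(H * s))) =
      autocorr z N (H * (r - s)) := by
  have hsplit : ∀ m : ℤ, m + ↑(H * r) = m + ↑(H * s) + ↑(H * (r - s)) := by
    intro m
    rw [add_assoc, ← Nat.cast_add, ← mul_add, Nat.add_sub_cancel' hs]
  have hle : H * s ≤ H * (R - 1) := Nat.mul_le_mul_left H (by omega)
  simp only [hsplit]
  rw [blockWindow, sum_Icc_comp_add_of_eq_zero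
    (f := fun k => extendByZero z N (k + ↑(H * (r - s))) * conj (extendByZero z N k)) (a := 1)
    (b := N) (fun k hk => by simp only [extendByZero_of_notMem z N hk, map_zero, mul_zero])
    (by omega) (by omega), sum_extendByZero_mul_conj]

theorem sum_norm_sq_blockSum :
    ∑ m ∈ blockWindow N H R, ‖blockSum z N H R m‖ ^ 2 =
      R * RCLike.re (autocorr z N 0) +
        2 * ∑ d ∈ Ico 1 R, ((R - d : ℕ) : ℝ) * RCLike.re (autocorr z N (H * d)) := by
  set w := extendByZero z N
  have hexpand : ∀ m, ‖blockSum z N H R m‖ ^ 2 =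
      ∑ r ∈ range R, ∑ s ∈ range R, RCLike.re (w (m + ↑(H * r)) * conj (w (m + ↑(H * s)))) := by
    intro m
    rw [← RCLike.re_ofReal_pow (K := 𝕜), ← RCLike.mul_conj, blockSum, map_sum, sum_mul_sum,
      map_sum]
    simp only [map_sum, w]
  have hlow : ∀ r < R, ∀ s ≤ r,
      RCLike.re (∑ m ∈ blockWindow N H R, w (m + ↑(H * r)) * conj (w (m + ↑(H * s)))) =
        RCLike.re (autocorr z N (H * (r - s))) := fun r hr s hs => by
    rw [sum_extendByZero_shift_mul_conj z N H R hr hs]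
  have hupp : ∀ r < R, ∀ s ≤ r,
      RCLike.re (∑ m ∈ blockWindow N H R, w (m + ↑(H * s)) * conj (w (m + ↑(H * r)))) =
        RCLike.re (autocorr z N (H * (r - s))) := fun r hr s hs => by
    rw [← hlow r hr s hs, ← RCLike.conj_re, map_sum]
    simp only [map_mul, RCLike.conj_conj, mul_comm]
  calc ∑ m ∈ blockWindow N H R, ‖blockSum z N H R m‖ ^ 2
      = ∑ r ∈ range R, ∑ s ∈ range R,
          RCLike.re (∑ m ∈ blockWindow N H R, w (m + ↑(H * r)) * conj (w (m + ↑(H * s)))) := by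
        rw [sum_congr rfl fun m _ => hexpand m, sum_comm]
        refine sum_congr rfl fun r _ => ?_
        rw [sum_comm]
        simp only [map_sum]
    _ = _ := by
        rw [sum_range_sum_range_eq_of_toeplitz (f := fun d => RCLike.re (autocorr z N (H * d)))
          hlow hupp]
        simp only [nsmul_eq_mul, mul_zero, Nat.cast_ofNat]

theorem sq_mul_norm_sum_le_autocorr :
    ((R : ℝ) * ‖∑ n ∈ Icc 1 N, z n‖) ^ 2 ≤
      (N + H * (R - 1) : ℕ) * (R * RCLike.re (autocorr z N 0) +
        2 * ∑ d ∈ Ico 1 R, ((R - d : ℕ) : ℝ) * RCLike.re (autocorr z N (H * d))) := by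
  have hcard : #(blockWindow N H R) = N + H * (R - 1) := by
    rw [blockWindow, Int.card_Icc]
    omega
  rw [← sum_norm_sq_blockSum, ← hcard, ← RCLike.norm_natCast (K := 𝕜) R, ← norm_mul,
    ← sum_blockSum]
  exact norm_sum_sq_le_card_mul_sum_norm_sq _ _

end VanDerCorput

theorem van_der_corput_variant_general (N N' R : ℕ) (hR : 1 ≤ R)
    (z : ℕ → ℂ) :
    ‖∑ n ∈ Finset.Icc 1 N, z n‖ ^ 2
      ≤ (((N : ℝ) + N' * R - N') / R) *
          (((∑ n ∈ Finset.Icc 1 N, ‖z n‖ ^ 2 : ℝ) : ℂ)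
            + 2 * ∑ r ∈ Finset.Icc 1 (R - 1),
                (((1 - (r : ℝ) / R : ℝ)) : ℂ) *
                  ∑ n ∈ Finset.Icc 1 (N - N' * r), z (n + N' * r) * (starRingEnd ℂ) (z n)).re := by
  have key := sq_mul_norm_sum_le_autocorr z N N' R
  have hR0 : (0 : ℝ) < R := by exact_mod_cast hR
  have hcard : ((N + N' * (R - 1) : ℕ) : ℝ) = N + N' * R - N' := by
    push_cast [Nat.cast_sub hR]
    ring
  have hweights : ∑ d ∈ Ico 1 R, ((R - d : ℕ) : ℝ) * (autocorr z N (N' * d)).re =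
      R * ∑ d ∈ Icc 1 (R - 1), (1 - (d : ℝ) / R) * (autocorr z N (N' * d)).re := by
    rw [← Icc_sub_one_right_eq_Ico_of_not_isMin (by simp; omega), mul_sum]
    refine sum_congr rfl fun d hd => ?_
    rw [mem_Icc] at hd
    rw [Nat.cast_sub (by omega)]
    field_simp
  simp only [RCLike.re_to_complex, re_autocorr_zero, hcard, hweights] at key
  simp only [← autocorr.eq_1, Complex.add_re, Complex.ofReal_re, Complex.mul_re, Complex.re_ofNat,
    Complex.im_ofNat, Complex.ofReal_im, zero_mul, sub_zero, Complex.re_sum]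
  rw [div_mul_eq_mul_div, le_div_iff₀ hR0]
  refine le_of_mul_le_mul_left ?_ hR0
  calc _ = _ := by ring
    _ ≤ _ := key
    _ = _ := by ring

/-- a variant of van der Corput's inequality with shift step `N'`:
`|Σ_{n=1}^N z_n|² ≤ ((N + N'R - N')/R)·Re(Σ_{n=1}^N |z_n|²
  + 2 Σ_{r=1}^{R-1} (1 - r/R) Σ_{n=1}^{N-N'r} z_{n+N'r}·conj(z_n))`,
where the inner sum is empty when `N'r ≥ N` (ℕ-subtraction). -/
theorem van_der_corput_variant (N N' R : ℕ) (hN : 1 ≤ N) (hN' : 1 ≤ N') (hR : 1 ≤ R)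
    (z : ℕ → ℂ) :
    ‖∑ n ∈ Finset.Icc 1 N, z n‖ ^ 2
      ≤ (((N : ℝ) + N' * R - N') / R) *
          (((∑ n ∈ Finset.Icc 1 N, ‖z n‖ ^ 2 : ℝ) : ℂ)
            + 2 * ∑ r ∈ Finset.Icc 1 (R - 1),
                (((1 - (r : ℝ) / R : ℝ)) : ℂ) *
                  ∑ n ∈ Finset.Icc 1 (N - N' * r), z (n + N' * r) * (starRingEnd ℂ) (z n)).re :=
  van_der_corput_variant_general N N' R hR z
end
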